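/- arXiv:1311.5102 — 2 statements merged into one kernel-verified Lean document; each statement's English description precedes it below -/
import Mathlib

section
/- Let v_1,...,v_n be unit vectors in ℝ^d such that for every unit vector u ∈ ℝ^d, Σ_{j=1}^n ⟨v_j, u⟩² ≤ t. Let P ⊆ ℝ^d be a two-dimensional linear subspace and α > 0. Then the number of indices j such that |⟨v_j, u⟩| ≥ α for some unit vector u ∈ P is at most (80/α³)·t. -/
/-!
Fix an orthonormal basis `b` of `P`. For `u ∈ P` of norm one, Cauchy–Schwarz inside `P` gives
`⟪v, u⟫² ≤ ∑ᵢ ⟪v, bᵢ⟫²`, so every counted `v_j` has `α² ≤ ∑ᵢ ⟪v_j, bᵢ⟫²`. Summing over `j` and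
applying the spreading hypothesis to each `bᵢ` bounds the count by `2t/α²`. Since the `v_j` are unit
vectors, nothing is counted unless `α ≤ 1`, and then `2t/α² ≤ 80t/α³`.
-/

open Finset Module RealInnerProductSpace

section

variable {E : Type*} [NormedAddCommGroup E] [InnerProductSpace ℝ E]

theorem OrthonormalBasis.inner_sq_le_sum_sq_inner_mul_norm_sq {ι : Type*} [Fintype ι]
    {K : Submodule ℝ E} [K.HasOrthogonalProjection] (b : OrthonormalBasis ι ℝ K) (v : E) (u : K) :
    ⟪v, u⟫ ^ 2 ≤ (∑ i, ⟪v, b i⟫ ^ 2) * ‖u‖ ^ 2 := by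
  have hproj : ‖K.orthogonalProjectionOnto v‖ ^ 2 = ∑ i, ⟪v, b i⟫ ^ 2 := by
    simp only [← b.sum_sq_inner_right, K.inner_orthogonalProjectionOnto_eq_of_mem_left,
      real_inner_comm]
  rw [← K.inner_orthogonalProjectionOnto_eq_of_mem_right, ← hproj, ← mul_pow, ← sq_abs]
  gcongr
  exact abs_real_inner_le_norm _ _

theorem ncard_mul_sq_le_finrank_mul {ι : Type*} [Fintype ι] (v : ι → E) {t : ℝ}
    (hspread : ∀ u : E, ‖u‖ = 1 → ∑ j, ⟪v j, u⟫ ^ 2 ≤ t)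
    (K : Submodule ℝ E) [FiniteDimensional ℝ K] {α : ℝ} (hα : 0 ≤ α) :
    ({j | ∃ u ∈ K, ‖u‖ = 1 ∧ α ≤ |⟪v j, u⟫|}.ncard : ℝ) * α ^ 2 ≤ finrank ℝ K * t := by
  classical
  let b := stdOrthonormalBasis ℝ K
  set S := {j | ∃ u ∈ K, ‖u‖ = 1 ∧ α ≤ |⟪v j, u⟫|}
  have hcounted : ∀ j ∈ S.toFinset, α ^ 2 ≤ ∑ i, ⟪v j, b i⟫ ^ 2 := by
    intro j hj
    obtain ⟨u, huK, hu, hαu⟩ := Set.mem_toFinset.mp hj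
    calc α ^ 2 ≤ ⟪v j, u⟫ ^ 2 := (pow_le_pow_left₀ hα hαu 2).trans_eq (sq_abs _)
      _ ≤ (∑ i, ⟪v j, b i⟫ ^ 2) * ‖(⟨u, huK⟩ : K)‖ ^ 2 :=
        b.inner_sq_le_sum_sq_inner_mul_norm_sq (v j) ⟨u, huK⟩
      _ = ∑ i, ⟪v j, b i⟫ ^ 2 := by rw [Submodule.coe_norm, hu, one_pow, mul_one]
  calc (S.ncard : ℝ) * α ^ 2 = S.toFinset.card • α ^ 2 := by
        rw [Set.ncard_eq_toFinset_card', nsmul_eq_mul]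
    _ ≤ ∑ j ∈ S.toFinset, ∑ i, ⟪v j, b i⟫ ^ 2 := card_nsmul_le_sum _ _ _ hcounted
    _ ≤ ∑ j, ∑ i, ⟪v j, b i⟫ ^ 2 :=
        sum_le_sum_of_subset_of_nonneg (subset_univ _) fun _ _ _ ↦ by positivity
    _ = ∑ i, ∑ j, ⟪v j, b i⟫ ^ 2 := sum_comm
    _ ≤ ∑ _i : Fin (finrank ℝ K), t :=
        sum_le_sum fun i _ ↦ hspread _ (b.norm_eq_one i)
    _ = finrank ℝ K * t := by simp

end

/-- if unit vectors v_j satisfy Σ_j ⟨v_j,u⟩² ≤ t for every unit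
vector u, and P is a two-dimensional subspace, then at most (80/α³)·t of the
v_j have correlation at least α with some unit vector of P. -/
theorem stmt_5 {d n : ℕ} (v : Fin n → EuclideanSpace ℝ (Fin d)) (t : ℝ)
    (hunit : ∀ j, ‖v j‖ = 1)
    (hspread : ∀ u : EuclideanSpace ℝ (Fin d), ‖u‖ = 1 →
      ∑ j : Fin n, (inner ℝ (v j) u : ℝ) ^ 2 ≤ t)
    (P : Submodule ℝ (EuclideanSpace ℝ (Fin d)))
    (hP : Module.finrank ℝ P = 2) (α : ℝ) (hα : 0 < α) :
    ({j : Fin n | ∃ u ∈ P, ‖u‖ = 1 ∧ α ≤ |(inner ℝ (v j) u : ℝ)|}.ncard : ℝ)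
      ≤ (80 / α ^ 3) * t := by
  set N := ({j : Fin n | ∃ u ∈ P, ‖u‖ = 1 ∧ α ≤ |(inner ℝ (v j) u : ℝ)|}.ncard : ℝ)
  have hcount : N * α ^ 2 ≤ 2 * t := by
    simpa [hP] using ncard_mul_sq_le_finrank_mul v hspread P hα.le
  have hN : 0 ≤ N := Nat.cast_nonneg _
  have ht : 0 ≤ t := by nlinarith
  rw [div_mul_eq_mul_div, le_div_iff₀ (by positivity)]
  by_cases hα1 : α ≤ 1
  · nlinarith [pow_le_pow_of_le_one hα.le hα1 (show 2 ≤ 3 by norm_num)]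
  · have hempty : {j : Fin n | ∃ u ∈ P, ‖u‖ = 1 ∧ α ≤ |(inner ℝ (v j) u : ℝ)|} = ∅ := by
      refine Set.eq_empty_of_forall_notMem fun j ⟨u, _, hu, hαu⟩ ↦ hα1 ?_
      simpa [hunit j, hu] using hαu.trans (abs_real_inner_le_norm (v j) u)
    simp only [N, hempty, Set.ncard_empty, Nat.cast_zero, zero_mul]
    positivity
end

section
/- Let u, v_i, v_j, v_k be unit vectors in ℝ^d with u ∈ span{v_i, v_j, v_k}, such that |⟨u, v_i⟩| ≤ 10^{-4}, |⟨u, v_j⟩| ≤ 10^{-4}, |⟨u, v_k⟩| ≤ 10^{-4}, and additionally |⟨v_j, v_k⟩| < 9/10. If |⟨v_i, v_j⟩| < 1/100 and |⟨v_i, v_k⟩| < 1/100, then a contradiction follows; equivalently, under the first set of hypotheses, either |⟨v_i, v_j⟩| ≥ 1/100 or |⟨v_i, v_k⟩| ≥ 1/100. -/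
/-!
Write `u = a • vᵢ + b • vⱼ + c • vₖ`. Pairing with each `v` gives a linear system in `(a, b, c)`
whose matrix is the Gram matrix of the triple; under the hypotheses its off-diagonal row sums are
at most `91/100`, so strict diagonal dominance bounds every coefficient by `(100/9) · 10⁻⁴`.
Pairing with `u` instead gives `1 = ‖u‖² = a ⟪u, vᵢ⟫ + b ⟪u, vⱼ⟫ + c ⟪u, vₖ⟫`, which is then
at most `3 · (100/9) · 10⁻⁸`.
-/

open RealInnerProductSpace

lemma abs_le_of_abs_add_mul_add_mul_le {x y z p q ε ρ m : ℝ} (h : |x + p * y + q * z| ≤ ε)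
    (hy : |y| ≤ m) (hz : |z| ≤ m) (hpq : |p| + |q| ≤ ρ) :
    |x| ≤ ε + ρ * m := by
  have hm : 0 ≤ m := (abs_nonneg y).trans hy
  have hpy : |p * y| ≤ |p| * m := by rw [abs_mul]; gcongr
  have hqz : |q * z| ≤ |q| * m := by rw [abs_mul]; gcongr
  have hρm : |p| * m + |q| * m ≤ ρ * m := by rw [← add_mul]; gcongr
  rw [abs_le] at h ⊢
  constructor <;>
    linarith [neg_abs_le (p * y), le_abs_self (p * y), neg_abs_le (q * z), le_abs_self (q * z)]

/-- For `ρ < 1` the matrix `!![1, α, β; α, 1, γ; β, γ, 1]` is strictly diagonally dominant, and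
this is the resulting `ℓ^∞` bound on its inverse. -/
lemma one_sub_mul_max_abs_le_of_diagonallyDominant {a b c α β γ ε ρ : ℝ}
    (h₁ : |a + α * b + β * c| ≤ ε) (h₂ : |b + α * a + γ * c| ≤ ε)
    (h₃ : |c + β * a + γ * b| ≤ ε)
    (hαβ : |α| + |β| ≤ ρ) (hαγ : |α| + |γ| ≤ ρ) (hβγ : |β| + |γ| ≤ ρ) :
    (1 - ρ) * max |a| (max |b| |c|) ≤ ε := by
  set m := max |a| (max |b| |c|)
  have ha : |a| ≤ m := le_max_left _ _
  have hb : |b| ≤ m := (le_max_left _ _).trans (le_max_right _ _)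
  have hc : |c| ≤ m := (le_max_right _ _).trans (le_max_right _ _)
  have hm : m ≤ ε + ρ * m :=
    max_le (abs_le_of_abs_add_mul_add_mul_le h₁ hb hc hαβ) <|
      max_le (abs_le_of_abs_add_mul_add_mul_le h₂ ha hc hαγ)
        (abs_le_of_abs_add_mul_add_mul_le h₃ ha hb hβγ)
  linarith

lemma one_sub_mul_norm_sq_le_of_mem_span_triple {E : Type*} [NormedAddCommGroup E]
    [InnerProductSpace ℝ E] {u v₁ v₂ v₃ : E} {ε ρ : ℝ}
    (hv₁ : ‖v₁‖ = 1) (hv₂ : ‖v₂‖ = 1) (hv₃ : ‖v₃‖ = 1) (hspan : u ∈ Submodule.span ℝ {v₁, v₂, v₃})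
    (hu₁ : |⟪u, v₁⟫| ≤ ε) (hu₂ : |⟪u, v₂⟫| ≤ ε) (hu₃ : |⟪u, v₃⟫| ≤ ε)
    (h₁ : |⟪v₁, v₂⟫| + |⟪v₁, v₃⟫| ≤ ρ) (h₂ : |⟪v₁, v₂⟫| + |⟪v₂, v₃⟫| ≤ ρ)
    (h₃ : |⟪v₁, v₃⟫| + |⟪v₂, v₃⟫| ≤ ρ) :
    (1 - ρ) * ‖u‖ ^ 2 ≤ 3 * ε ^ 2 := by
  obtain ⟨a, b, c, rfl⟩ := Submodule.mem_span_triple.mp hspan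
  have hv₁₁ : ⟪v₁, v₁⟫ = 1 := by simp [hv₁]
  have hv₂₂ : ⟪v₂, v₂⟫ = 1 := by simp [hv₂]
  have hv₃₃ : ⟪v₃, v₃⟫ = 1 := by simp [hv₃]
  set u := a • v₁ + b • v₂ + c • v₃
  have gram₁ : ⟪u, v₁⟫ = a + ⟪v₁, v₂⟫ * b + ⟪v₁, v₃⟫ * c := by
    simp only [u, inner_add_left, real_inner_smul_left, hv₁₁, real_inner_comm v₁ v₂,
      real_inner_comm v₁ v₃]
    ring
  have gram₂ : ⟪u, v₂⟫ = b + ⟪v₁, v₂⟫ * a + ⟪v₂, v₃⟫ * c := by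
    simp only [u, inner_add_left, real_inner_smul_left, hv₂₂, real_inner_comm v₂ v₃]
    ring
  have gram₃ : ⟪u, v₃⟫ = c + ⟪v₁, v₃⟫ * a + ⟪v₂, v₃⟫ * b := by
    simp only [u, inner_add_left, real_inner_smul_left, hv₃₃]
    ring
  have hcoeff := one_sub_mul_max_abs_le_of_diagonallyDominant
    (gram₁ ▸ hu₁) (gram₂ ▸ hu₂) (gram₃ ▸ hu₃) h₁ h₂ h₃
  have hnorm : ‖u‖ ^ 2 = a * ⟪u, v₁⟫ + b * ⟪u, v₂⟫ + c * ⟪u, v₃⟫ := by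
    rw [← real_inner_self_eq_norm_sq]
    simp only [u, inner_add_right, real_inner_smul_right]
  set m := max |a| (max |b| |c|)
  have hε : 0 ≤ ε := (abs_nonneg _).trans hu₁
  have hterm : ∀ {x y : ℝ}, |x| ≤ m → |y| ≤ ε → x * y ≤ m * ε := fun hx hy =>
    (le_abs_self _).trans <| (abs_mul _ _).trans_le <| mul_le_mul hx hy (abs_nonneg _) <|
      (abs_nonneg _).trans hx
  have hnorm_le : ‖u‖ ^ 2 ≤ 3 * m * ε := by
    rw [hnorm]
    linarith [hterm (le_max_left _ _) hu₁, hterm ((le_max_left _ _).trans (le_max_right _ _)) hu₂,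
      hterm ((le_max_right _ _).trans (le_max_right _ _)) hu₃]
  rcases le_or_gt 0 (1 - ρ) with hρ | hρ
  · nlinarith [mul_le_mul_of_nonneg_left hnorm_le hρ]
  · nlinarith [sq_nonneg ‖u‖]

/-- if u, v_i, v_j, v_k are unit vectors with u in the span of
the triple, u nearly orthogonal (≤ 10⁻⁴) to each of v_i, v_j, v_k, and
|⟨v_j,v_k⟩| < 9/10, then |⟨v_i,v_j⟩| ≥ 1/100 or |⟨v_i,v_k⟩| ≥ 1/100. -/
theorem stmt_6 {d : ℕ} (u vi vj vk : EuclideanSpace ℝ (Fin d))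
    (hu : ‖u‖ = 1) (hvi : ‖vi‖ = 1) (hvj : ‖vj‖ = 1) (hvk : ‖vk‖ = 1)
    (hspan : u ∈ Submodule.span ℝ ({vi, vj, vk} : Set (EuclideanSpace ℝ (Fin d))))
    (hui : |(inner ℝ u vi : ℝ)| ≤ 1 / 10 ^ 4)
    (huj : |(inner ℝ u vj : ℝ)| ≤ 1 / 10 ^ 4)
    (huk : |(inner ℝ u vk : ℝ)| ≤ 1 / 10 ^ 4)
    (hjk : |(inner ℝ vj vk : ℝ)| < 9 / 10) :
    1 / 100 ≤ |(inner ℝ vi vj : ℝ)| ∨ 1 / 100 ≤ |(inner ℝ vi vk : ℝ)| := by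
  by_contra! h
  obtain ⟨hij, hik⟩ := h
  have key := one_sub_mul_norm_sq_le_of_mem_span_triple (ρ := 91 / 100) hvi hvj hvk hspan
    hui huj huk (by linarith) (by linarith) (by linarith)
  norm_num [hu] at key
end
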